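/- Let k ≥ 2 be an integer and let χ : ℝ^N → [0,∞) be a continuous, nonnegative, compactly supported function whose Fourier transform χ̂ (with convention χ̂(x) = ∫_{ℝ^N} χ(t) e(−x·t) dt) is real-valued and nonnegative. Then for every even integer p ≥ 2 and every measurable f : [0,1]² → ℂ with |f(ξ)| ≤ 1 for almost every ξ, one has ∫_{ℝ^N} |E_k f(x)|^p · χ̂(x)^p dx ≤ ∫_{ℝ^N} |E_k 1(x)|^p · χ̂(x)^p dx. -/

import Mathlib

open MeasureTheory Real Set
open scoped ENNReal

noncomputable section

/-- Index set for multi-indices `β = (β₁, β₂) ∈ ℕ²` with `1 ≤ β₁ + β₂ ≤ k`;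
its cardinality is `N = (k+1)(k+2)/2 − 1`. -/
def Idx (k : ℕ) : Type :=
  {β : Fin (k + 1) × Fin (k + 1) // 1 ≤ (β.1 : ℕ) + (β.2 : ℕ) ∧ (β.1 : ℕ) + (β.2 : ℕ) ≤ k}

instance (k : ℕ) : Fintype (Idx k) := by unfold Idx; infer_instance

/-- The phase polynomial `P(ξ; x) = ∑_{1 ≤ |β| ≤ k} x_β ξ₁^{β₁} ξ₂^{β₂}`. -/
def Pphase (k : ℕ) (x : Idx k → ℝ) (ξ : Fin 2 → ℝ) : ℝ :=
  ∑ β : Idx k, x β * ξ 0 ^ (β.1.1 : ℕ) * ξ 1 ^ (β.1.2 : ℕ)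

/-- `E_k1(x) = ∫_{[0,1]²} e(P(ξ; x)) dξ` with `e(t) = exp(2πit)`. -/
def Eone (k : ℕ) (x : Idx k → ℝ) : ℂ :=
  ∫ ξ in Icc (0 : Fin 2 → ℝ) 1, Complex.exp (2 * Real.pi * Complex.I * (Pphase k x ξ))
/-- The Fourier extension operator `E_k f(x) = ∫_{[0,1]²} f(ξ) e(P(ξ; x)) dξ`. -/
def Eext (k : ℕ) (f : (Fin 2 → ℝ) → ℂ) (x : Idx k → ℝ) : ℂ :=
  ∫ ξ in Icc (0 : Fin 2 → ℝ) 1, f ξ * Complex.exp (2 * Real.pi * Complex.I * (Pphase k x ξ))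


/-- one-dimensional Gaussian value -/
def g1val (c u : ℝ) : ℝ := (π*c)^((1:ℝ)/2) * rexp (-(π^2*c) * u^2)

lemma g1val_nonneg {c : ℝ} (hc : 0 < c) (u : ℝ) : 0 ≤ g1val c u := by
  have h1 : (0:ℝ) ≤ π*c := by positivity
  exact mul_nonneg (Real.rpow_nonneg h1 _) (Real.exp_pos _).le

lemma gauss_one {c : ℝ} (hc : 0 < c) (u : ℝ) :
    ∫ s : ℝ, (rexp (-c⁻¹ * s^2) : ℂ) * Complex.exp (2*π*Complex.I*(s*u)) = (g1val c u : ℂ) := by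
  have hb : (0:ℝ) < c⁻¹ := by positivity
  have h := fourierIntegral_gaussian (b := (c⁻¹:ℂ)) (by simpa using hb) ((2*π*u : ℝ) : ℂ)
  have hL : (∫ x : ℝ, Complex.exp (Complex.I * ((2*π*u:ℝ):ℂ) * x) * Complex.exp (-(c⁻¹:ℂ) * x^2))
      = ∫ s : ℝ, (rexp (-c⁻¹ * s^2) : ℂ) * Complex.exp (2*π*Complex.I*(s*u)) := by
    congr 1; funext s
    rw [mul_comm]
    congr 1
    · rw [Complex.ofReal_exp]; congr 1; push_cast; ring
    · congr 1; push_cast; ring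
  rw [hL] at h
  rw [h, g1val]
  have h1 : ((π:ℂ) / (c⁻¹:ℂ)) = ((π*c : ℝ) : ℂ) := by
    push_cast; field_simp
  have h2 : ((π*c : ℝ) : ℂ) ^ ((1:ℂ)/2) = (((π*c)^((1:ℝ)/2) : ℝ) : ℂ) := by
    rw [Complex.ofReal_cpow (by positivity)]
    norm_num
  have h3 : (-(((2*π*u:ℝ):ℂ))^2 / (4 * (c⁻¹:ℂ))) = ((-(π^2*c) * u^2 : ℝ) : ℂ) := by
    push_cast; field_simp; ring
  rw [h1, show (1/2 : ℂ) = ((1:ℂ)/2) by norm_num, h2, h3, ← Complex.ofReal_exp, ← Complex.ofReal_mul]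

/-- Gaussian weight on a product space -/
def gwt {ι : Type*} [Fintype ι] (c : ℝ) (x : ι → ℝ) : ℝ := ∏ i, rexp (-c⁻¹ * (x i)^2)

/-- value of the Fourier transform of the Gaussian weight -/
def gAval {ι : Type*} [Fintype ι] (c : ℝ) (u : ι → ℝ) : ℝ := ∏ i, g1val c (u i)

lemma gwt_nonneg {ι : Type*} [Fintype ι] (c : ℝ) (x : ι → ℝ) : 0 ≤ gwt c x :=
  Finset.prod_nonneg fun i _ => (Real.exp_pos _).le

lemma gwt_le_one {ι : Type*} [Fintype ι] {c : ℝ} (hc : 0 < c) (x : ι → ℝ) : gwt c x ≤ 1 := by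
  apply Finset.prod_le_one (fun i _ => (Real.exp_pos _).le)
  intro i _
  rw [Real.exp_le_one_iff]
  have : (0:ℝ) ≤ c⁻¹ * (x i)^2 := by positivity
  linarith

lemma gAval_nonneg {ι : Type*} [Fintype ι] {c : ℝ} (hc : 0 < c) (u : ι → ℝ) : 0 ≤ gAval c u :=
  Finset.prod_nonneg fun i _ => g1val_nonneg hc _

lemma gAval_le {ι : Type*} [Fintype ι] {c : ℝ} (hc : 0 < c) (u : ι → ℝ) :
    gAval c u ≤ ((π*c)^((1:ℝ)/2)) ^ (Fintype.card ι) := by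
  rw [gAval, ← Finset.card_univ, ← Finset.prod_const]
  refine Finset.prod_le_prod (fun i _ => g1val_nonneg hc _) (fun i _ => ?_)
  rw [g1val]
  nth_rewrite 2 [← mul_one ((π*c)^((1:ℝ)/2))]
  refine mul_le_mul_of_nonneg_left ?_ (Real.rpow_nonneg (by positivity) _)
  rw [Real.exp_le_one_iff]
  have : (0:ℝ) ≤ (π^2*c) * u i^2 := by positivity
  linarith

lemma integrable_gwt_one {c : ℝ} (hc : 0 < c) :
    Integrable (fun s : ℝ => rexp (-c⁻¹ * s^2)) := by
  simpa using integrable_exp_neg_mul_sq (show (0:ℝ) < c⁻¹ by positivity)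

lemma integrable_gwt {ι : Type*} [Fintype ι] {c : ℝ} (hc : 0 < c) :
    Integrable (fun x : ι → ℝ => gwt c x) :=
  Integrable.fintype_prod (f := fun _ s => rexp (-c⁻¹ * s^2)) fun _ => integrable_gwt_one hc

lemma gauss_pi {ι : Type*} [Fintype ι] {c : ℝ} (hc : 0 < c) (u : ι → ℝ) :
    ∫ x : ι → ℝ, (gwt c x : ℂ) * Complex.exp (2*π*Complex.I * ((∑ i, x i * u i : ℝ) : ℂ))
      = (gAval c u : ℂ) := by
  have : ∀ x : ι → ℝ, (gwt c x : ℂ) * Complex.exp (2*π*Complex.I * ((∑ i, x i * u i : ℝ) : ℂ))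
      = ∏ i, ((rexp (-c⁻¹ * (x i)^2) : ℂ) * Complex.exp (2*π*Complex.I*((x i) * (u i)))) := by
    intro x
    rw [Finset.prod_mul_distrib, gwt]
    push_cast
    rw [Finset.mul_sum, Complex.exp_sum]
  simp only [this]
  rw [MeasureTheory.integral_fintype_prod_volume_eq_prod
    (f := fun i s => (rexp (-c⁻¹ * s^2) : ℂ) * Complex.exp (2*π*Complex.I*(s * u i)))]
  rw [gAval, Complex.ofReal_prod]
  exact Finset.prod_congr rfl fun i _ => gauss_one hc (u i)

lemma norm_exp_I_ofReal (a : ℝ) : ‖Complex.exp (2*π*Complex.I * (a:ℝ))‖ = 1 := by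
  rw [Complex.norm_exp]; simp

lemma norm_exp_neg_I_ofReal (a : ℝ) : ‖Complex.exp (-(2*π*Complex.I) * (a:ℝ))‖ = 1 := by
  rw [Complex.norm_exp]; simp


/-- the character `e(r) = exp(2πir)` -/
def eee (r : ℝ) : ℂ := Complex.exp (2*π*Complex.I * (r:ℝ))

lemma eee_add (a b : ℝ) : eee (a+b) = eee a * eee b := by
  unfold eee; push_cast; rw [mul_add, Complex.exp_add]

lemma eee_sum {ι : Type*} (s : Finset ι) (f : ι → ℝ) :
    eee (∑ i ∈ s, f i) = ∏ i ∈ s, eee (f i) := by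
  unfold eee; push_cast; rw [Finset.mul_sum, Complex.exp_sum]

lemma norm_eee (r : ℝ) : ‖eee r‖ = 1 := by
  rw [eee, Complex.norm_exp]; simp

lemma conj_eee (r : ℝ) : (starRingEnd ℂ) (eee r) = eee (-r) := by
  rw [eee, eee, ← Complex.exp_conj]
  congr 1
  simp only [map_mul, Complex.conj_I, Complex.conj_ofReal, map_ofNat]
  push_cast
  ring

lemma continuous_eee_comp {X : Type*} [TopologicalSpace X] {g : X → ℝ} (hg : Continuous g) :
    Continuous fun x => eee (g x) :=
  Complex.continuous_exp.comp (continuous_const.mul (Complex.continuous_ofReal.comp hg))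

lemma continuous_gwt {ι : Type*} [Fintype ι] (c : ℝ) : Continuous (fun x : ι → ℝ => gwt c x) :=
  continuous_finset_prod _ fun i _ =>
    Real.continuous_exp.comp (continuous_const.mul ((continuous_apply i).pow 2))

section Kernel

variable {k : ℕ} {χ : (Idx k → ℝ) → ℝ}

/-- the kernel `κ_c`, a superposition of translated Gaussians -/
def kap (k p : ℕ) (χ : (Idx k → ℝ) → ℝ) (c : ℝ) (y : Idx k → ℝ) : ℝ :=
  ∫ t : Fin p → (Idx k → ℝ), (∏ j, χ (t j)) * gAval c (fun β => y β - ∑ j, t j β)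

lemma kap_nonneg (hχnn : ∀ t, 0 ≤ χ t) {p : ℕ} {c : ℝ} (hc : 0 < c) (y : Idx k → ℝ) :
    0 ≤ kap k p χ c y :=
  integral_nonneg fun t => mul_nonneg (Finset.prod_nonneg fun j _ => hχnn _) (gAval_nonneg hc _)

lemma continuous_gAval {ι : Type*} [Fintype ι] (c : ℝ) :
    Continuous (fun u : ι → ℝ => gAval c u) := by
  refine continuous_finset_prod _ fun i _ => ?_
  unfold g1val
  fun_prop

lemma continuous_usub {p : ℕ} (y : Idx k → ℝ) :
    Continuous (fun t : Fin p → (Idx k → ℝ) => (fun β => y β - ∑ j, t j β : Idx k → ℝ)) := by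
  refine continuous_pi fun β => Continuous.sub continuous_const ?_
  exact continuous_finset_sum _ fun j _ => (continuous_apply β).comp (continuous_apply j)

lemma integrable_prod_chi (hχc : Continuous χ) (hχsupp : HasCompactSupport χ) (p : ℕ) :
    Integrable (fun t : Fin p → (Idx k → ℝ) => ∏ j, χ (t j)) :=
  Integrable.fintype_prod (f := fun _ s => χ s)
    (fun _ => hχc.integrable_of_hasCompactSupport hχsupp)

lemma integrable_kap_integrand (hχc : Continuous χ) (hχnn : ∀ t, 0 ≤ χ t)
    (hχsupp : HasCompactSupport χ) {p : ℕ} {c : ℝ} (hc : 0 < c) (y : Idx k → ℝ) :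
    Integrable (fun t : Fin p → (Idx k → ℝ) =>
      (∏ j, χ (t j)) * gAval c (fun β => y β - ∑ j, t j β)) := by
  refine Integrable.mono' ((integrable_prod_chi hχc hχsupp p).const_mul
      (((π*c)^((1:ℝ)/2)) ^ (Fintype.card (Idx k)))) ?_ ?_
  · exact (Continuous.mul (continuous_finset_prod _ fun j _ =>
      hχc.comp (continuous_apply j)) ((continuous_gAval c).comp (continuous_usub y))).aestronglyMeasurable
  · filter_upwards with t
    rw [Real.norm_eq_abs, abs_of_nonneg (mul_nonneg
      (Finset.prod_nonneg fun j _ => hχnn _) (gAval_nonneg hc _)), mul_comm (((π*c)^((1:ℝ)/2)) ^ (Fintype.card (Idx k)))]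
    exact mul_le_mul_of_nonneg_left (gAval_le hc _) (Finset.prod_nonneg fun j _ => hχnn _)

lemma continuous_kap (hχc : Continuous χ) (hχnn : ∀ t, 0 ≤ χ t)
    (hχsupp : HasCompactSupport χ) {p : ℕ} {c : ℝ} (hc : 0 < c) :
    Continuous (kap k p χ c) := by
  refine continuous_of_dominated ?_ ?_
    ((integrable_prod_chi hχc hχsupp p).const_mul
      (((π*c)^((1:ℝ)/2)) ^ (Fintype.card (Idx k)))).norm ?_
  · intro y
    exact (integrable_kap_integrand hχc hχnn hχsupp hc y).aestronglyMeasurable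
  · intro y
    filter_upwards with t
    rw [Real.norm_eq_abs, Real.norm_eq_abs, abs_of_nonneg (mul_nonneg
      (Finset.prod_nonneg fun j _ => hχnn _) (gAval_nonneg hc _)),
      abs_of_nonneg (mul_nonneg (by positivity) (Finset.prod_nonneg fun j _ => hχnn _)),
      mul_comm (((π*c)^((1:ℝ)/2)) ^ (Fintype.card (Idx k)))]
    exact mul_le_mul_of_nonneg_left (gAval_le hc _) (Finset.prod_nonneg fun j _ => hχnn _)
  · filter_upwards with t
    exact Continuous.mul continuous_const ((continuous_gAval c).comp
      (continuous_pi fun β => (continuous_apply β).sub continuous_const))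

lemma Kc_eq (hχc : Continuous χ) (hχnn : ∀ t, 0 ≤ χ t) (hχsupp : HasCompactSupport χ)
    {F : (Idx k → ℝ) → ℂ}
    (hF' : ∀ x, F x = ∫ t : Idx k → ℝ, (χ t : ℂ) * eee (-(∑ β, x β * t β)))
    {p : ℕ} {c : ℝ} (hc : 0 < c) (y : Idx k → ℝ) :
    ∫ x : Idx k → ℝ, (F x)^p * ((gwt c x : ℝ):ℂ) * eee (∑ β, x β * y β)
      = ((kap k p χ c y : ℝ) : ℂ) := by
  have hχint : Integrable χ := hχc.integrable_of_hasCompactSupport hχsupp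
  -- the big integrand on the product space
  set big : (Idx k → ℝ) → (Fin p → Idx k → ℝ) → ℂ := fun x t =>
    (∏ j, ((χ (t j):ℂ) * eee (-(∑ β, x β * t j β)))) * (((gwt c x : ℝ):ℂ) * eee (∑ β, x β * y β))
    with hbig
  have h1 : ∀ x : Idx k → ℝ, F x ^ p
      = ∫ t : Fin p → (Idx k → ℝ), ∏ j, ((χ (t j):ℂ) * eee (-(∑ β, x β * t j β))) := by
    intro x
    have := MeasureTheory.integral_fintype_prod_volume_eq_pow (ι := Fin p)
      (f := fun s : Idx k → ℝ => (χ s:ℂ) * eee (-(∑ β, x β * s β)))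
    rw [Fintype.card_fin] at this
    rw [hF' x, ← this]
  have hcont : Continuous (fun z : (Idx k → ℝ) × (Fin p → Idx k → ℝ) => big z.1 z.2) := by
    apply Continuous.mul
    · refine continuous_finset_prod _ fun j _ => Continuous.mul ?_ ?_
      · exact Complex.continuous_ofReal.comp (hχc.comp ((continuous_apply j).comp continuous_snd))
      · refine continuous_eee_comp (Continuous.neg ?_)
        refine continuous_finset_sum _ fun β _ => Continuous.mul ?_ ?_
        · exact (continuous_apply β).comp continuous_fst
        · exact (continuous_apply β).comp ((continuous_apply j).comp continuous_snd)
    · exact Continuous.mul (Complex.continuous_ofReal.comp ((continuous_gwt c).comp continuous_fst))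
        (continuous_eee_comp (continuous_finset_sum _ fun β _ =>
          ((continuous_apply β).comp continuous_fst).mul continuous_const))
  have hInt : Integrable (Function.uncurry big)
      ((volume : Measure (Idx k → ℝ)).prod (volume : Measure (Fin p → Idx k → ℝ))) := by
    refine Integrable.mono' ((integrable_gwt hc).mul_prod
      (integrable_prod_chi hχc hχsupp p)) hcont.aestronglyMeasurable ?_
    filter_upwards with z
    have h2 : ‖∏ j, ((χ (z.2 j):ℂ) * eee (-(∑ β, z.1 β * z.2 j β)))‖ = ∏ j, χ (z.2 j) := by
      rw [norm_prod]
      refine Finset.prod_congr rfl fun j _ => ?_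
      rw [norm_mul, norm_eee, Complex.norm_real, mul_one, Real.norm_eq_abs,
        abs_of_nonneg (hχnn _)]
    show ‖big z.1 z.2‖ ≤ _
    calc ‖big z.1 z.2‖ = (∏ j, χ (z.2 j)) * gwt c z.1 := by
          rw [hbig]
          simp only [norm_mul]
          rw [h2, norm_eee, Complex.norm_real, Real.norm_eq_abs, abs_of_nonneg (gwt_nonneg c _)]
          ring
      _ ≤ gwt c z.1 * ∏ j, χ (z.2 j) := le_of_eq (mul_comm _ _)
  calc ∫ x : Idx k → ℝ, (F x)^p * ((gwt c x : ℝ):ℂ) * eee (∑ β, x β * y β)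
      = ∫ x : Idx k → ℝ, ∫ t : Fin p → Idx k → ℝ, big x t := by
        refine integral_congr_ae (Filter.Eventually.of_forall fun x => ?_)
        show F x ^ p * ((gwt c x : ℝ):ℂ) * eee (∑ β, x β * y β) = _
        rw [mul_assoc, h1 x, ← MeasureTheory.integral_mul_const]
    _ = ∫ t : Fin p → Idx k → ℝ, ∫ x : Idx k → ℝ, big x t := integral_integral_swap hInt
    _ = ∫ t : Fin p → Idx k → ℝ,
          ((∏ j, χ (t j) : ℝ) : ℂ) * ((gAval c (fun β => y β - ∑ j, t j β) : ℝ) : ℂ) := by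
        refine integral_congr_ae (Filter.Eventually.of_forall fun t => ?_)
        have h3 : ∀ x : Idx k → ℝ, big x t
            = ((∏ j, χ (t j) : ℝ) : ℂ) *
              (((gwt c x : ℝ):ℂ) * eee (∑ β, x β * (y β - ∑ j, t j β))) := by
          intro x
          rw [hbig]
          simp only [Finset.prod_mul_distrib]
          rw [← eee_sum Finset.univ (fun j => -(∑ β, x β * t j β))]
          have hsum : ((∑ β, x β * y β) + ∑ j, -(∑ β, x β * t j β))
              = ∑ β, x β * (y β - ∑ j, t j β) := by
            simp only [mul_sub, Finset.sum_sub_distrib, Finset.mul_sum, Finset.sum_neg_distrib]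
            rw [Finset.sum_comm]
            ring
          rw [← hsum, eee_add]
          push_cast
          ring
        simp only [h3]
        rw [MeasureTheory.integral_const_mul]
        congr 1
        exact gauss_pi hc _
    _ = ((kap k p χ c y : ℝ) : ℂ) := by
        rw [kap]
        norm_cast

lemma cintofReal {α : Type*} [MeasurableSpace α] {μ : Measure α} (g : α → ℝ) :
    ∫ a, ((g a : ℝ) : ℂ) ∂μ = ((∫ a, g a ∂μ : ℝ) : ℂ) := integral_ofReal

lemma prod_ite_pow {M : Type*} [CommMonoid M] (m : ℕ) (a b : M) :
    (∏ j : Fin (m+m), (if (j:ℕ) < m then a else b)) = a^m * b^m := by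
  rw [Fin.prod_univ_add]
  rw [Finset.prod_congr rfl (fun (i : Fin m) _ => if_pos (by simp [Fin.is_lt] : ((Fin.castAdd m i : Fin (m+m)):ℕ) < m))]
  rw [Finset.prod_congr rfl (fun (i : Fin m) _ => if_neg (by simp : ¬ ((Fin.natAdd m i : Fin (m+m)):ℕ) < m))]
  simp

lemma F_cont {k : ℕ} {χ : (Idx k → ℝ) → ℝ} (hχc : Continuous χ) (hχnn : ∀ t, 0 ≤ χ t)
    (hχsupp : HasCompactSupport χ) {F : (Idx k → ℝ) → ℂ}
    (hF' : ∀ x, F x = ∫ t : Idx k → ℝ, (χ t : ℂ) * eee (-(∑ β, x β * t β))) :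
    Continuous F := by
  rw [show F = fun x => ∫ t : Idx k → ℝ, (χ t : ℂ) * eee (-(∑ β, x β * t β)) from funext hF']
  refine continuous_of_dominated ?_ ?_ (hχc.integrable_of_hasCompactSupport hχsupp) ?_
  · intro x
    refine Continuous.aestronglyMeasurable (Continuous.mul (by fun_prop) ?_)
    exact continuous_eee_comp (Continuous.neg (continuous_finset_sum _ fun β _ =>
      continuous_const.mul (continuous_apply β)))
  · intro x
    filter_upwards with t
    rw [norm_mul, norm_eee, Complex.norm_real, mul_one, Real.norm_eq_abs, abs_of_nonneg (hχnn t)]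
  · filter_upwards with t
    refine Continuous.mul continuous_const (continuous_eee_comp (Continuous.neg ?_))
    exact continuous_finset_sum _ fun β _ => (continuous_apply β).mul continuous_const

end Kernel

/-- indicator of the unit square -/
def indQ : (Fin 2 → ℝ) → ℝ := (Icc (0:Fin 2 → ℝ) 1).indicator (fun _ => 1)

/-- the `2m` functions: `m` copies of `h` and `m` copies of its conjugate -/
def hhf (m : ℕ) (h : (Fin 2 → ℝ) → ℂ) (j : Fin (m+m)) : (Fin 2 → ℝ) → ℂ :=
  if (j:ℕ) < m then h else fun ξ => (starRingEnd ℂ) (h ξ)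

/-- signs -/
def sgn (m : ℕ) (j : Fin (m+m)) : ℝ := if (j:ℕ) < m then 1 else -1

/-- the combined frequency -/
def Phi (k m : ℕ) (Ξ : Fin (m+m) → (Fin 2 → ℝ)) : Idx k → ℝ :=
  fun β => ∑ j, sgn m j * ((Ξ j 0)^(β.1.1:ℕ) * (Ξ j 1)^(β.1.2:ℕ))

/-- extension operator over the full plane -/
def EE (k : ℕ) (h : (Fin 2 → ℝ) → ℂ) (x : Idx k → ℝ) : ℂ := ∫ ξ : Fin 2 → ℝ, h ξ * eee (Pphase k x ξ)

lemma indQ_nonneg (ξ : Fin 2 → ℝ) : 0 ≤ indQ ξ := by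
  unfold indQ Set.indicator; split <;> norm_num

lemma indQ_le_one (ξ : Fin 2 → ℝ) : indQ ξ ≤ 1 := by
  unfold indQ Set.indicator; split <;> norm_num

lemma integrable_indQ : Integrable indQ := by
  unfold indQ
  rw [integrable_indicator_iff measurableSet_Icc]
  exact integrableOn_const ((isCompact_Icc).measure_lt_top).ne

lemma measurable_indQ : Measurable indQ :=
  (measurable_const.indicator measurableSet_Icc)

lemma continuous_Pphase_prod {k m : ℕ} (j : Fin (m+m)) :
    Continuous (fun z : (Idx k → ℝ) × (Fin (m+m) → Fin 2 → ℝ) => Pphase k z.1 (z.2 j)) := by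
  unfold Pphase
  refine continuous_finset_sum _ fun β _ => ?_
  refine Continuous.mul (Continuous.mul ?_ ?_) ?_
  · exact (continuous_apply β).comp continuous_fst
  · exact (((continuous_apply (0 : Fin 2)).comp ((continuous_apply j).comp continuous_snd)).pow _)
  · exact (((continuous_apply (1 : Fin 2)).comp ((continuous_apply j).comp continuous_snd)).pow _)

lemma measurable_prod_hhf {m : ℕ} {h : (Fin 2 → ℝ) → ℂ} (hmeas : Measurable h) :
    Measurable (fun Ξ : Fin (m+m) → Fin 2 → ℝ => ∏ j, hhf m h j (Ξ j)) := by
  refine Finset.measurable_prod _ fun j _ => ?_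
  have : Measurable (hhf m h j) := by
    unfold hhf; split
    · exact hmeas
    · exact Complex.continuous_conj.measurable.comp hmeas
  exact this.comp (measurable_pi_apply j)

lemma continuous_Phi {k m : ℕ} : Continuous (Phi k m) := by
  unfold Phi
  refine continuous_pi fun β => continuous_finset_sum _ fun j _ => Continuous.mul continuous_const ?_
  fun_prop

section Main

variable {k : ℕ} {χ : (Idx k → ℝ) → ℝ} {F : (Idx k → ℝ) → ℂ}

lemma kap_le (hχc : Continuous χ) (hχnn : ∀ t, 0 ≤ χ t) (hχsupp : HasCompactSupport χ)
    {p : ℕ} {c : ℝ} (hc : 0 < c) (y : Idx k → ℝ) :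
    kap k p χ c y ≤ ((π*c)^((1:ℝ)/2))^(Fintype.card (Idx k))
      * ∫ t : Fin p → (Idx k → ℝ), ∏ j, χ (t j) := by
  rw [kap, ← MeasureTheory.integral_const_mul]
  refine integral_mono (integrable_kap_integrand hχc hχnn hχsupp hc y)
    ((integrable_prod_chi hχc hχsupp p).const_mul _) fun t => ?_
  rw [mul_comm (((π*c)^((1:ℝ)/2))^(Fintype.card (Idx k)))]
  exact mul_le_mul_of_nonneg_left (gAval_le hc _) (Finset.prod_nonneg fun j _ => hχnn _)

set_option maxHeartbeats 2000000 in
lemma key (hχc : Continuous χ) (hχnn : ∀ t, 0 ≤ χ t) (hχsupp : HasCompactSupport χ)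
    (hFreal : ∀ x, (F x).im = 0)
    (hF' : ∀ x, F x = ∫ t : Idx k → ℝ, (χ t : ℂ) * eee (-(∑ β, x β * t β)))
    {m : ℕ} {c : ℝ} (hc : 0 < c) (h : (Fin 2 → ℝ) → ℂ) (hmeas : Measurable h)
    (hbd : ∀ ξ, ‖h ξ‖ ≤ indQ ξ) :
    (∫ x : Idx k → ℝ, ‖EE k h x‖^(m+m) * (F x).re^(m+m) * gwt c x)
      = ∫ Ξ : Fin (m+m) → (Fin 2 → ℝ),
          kap k (m+m) χ c (Phi k m Ξ) * (∏ j, hhf m h j (Ξ j)).re := by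
  have hχint : Integrable χ := hχc.integrable_of_hasCompactSupport hχsupp
  have hFc : Continuous F := F_cont hχc hχnn hχsupp hF'
  have hMnn : (0:ℝ) ≤ ∫ t, χ t := integral_nonneg hχnn
  have hFbound : ∀ x, ‖F x‖ ≤ ∫ t, χ t := by
    intro x; rw [hF' x]
    refine le_trans (norm_integral_le_integral_norm _) (le_of_eq ?_)
    refine integral_congr_ae (Filter.Eventually.of_forall fun t => ?_)
    simp only [norm_mul, norm_eee, mul_one, Complex.norm_real, Real.norm_eq_abs,
      abs_of_nonneg (hχnn t)]
  have hhbd : ∀ (j : Fin (m+m)) ξ, ‖hhf m h j ξ‖ ≤ indQ ξ := by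
    intro j ξ; unfold hhf; split
    · exact hbd ξ
    · simpa using hbd ξ
  set bigE : (Idx k → ℝ) → (Fin (m+m) → Fin 2 → ℝ) → ℂ := fun x Ξ =>
    (∏ j, (hhf m h j (Ξ j) * eee (sgn m j * Pphase k x (Ξ j))))
      * (F x ^ (m+m) * ((gwt c x : ℝ):ℂ)) with hbigE
  have hphase : ∀ (x : Idx k → ℝ) (Ξ : Fin (m+m) → Fin 2 → ℝ),
      (∑ j, sgn m j * Pphase k x (Ξ j)) = ∑ β, x β * Phi k m Ξ β := by
    intro x Ξ
    unfold Pphase Phi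
    simp only [Finset.mul_sum]
    rw [Finset.sum_comm]
    exact Finset.sum_congr rfl fun β _ => Finset.sum_congr rfl fun j _ => by ring
  have hfac : ∀ (x : Idx k → ℝ) (j : Fin (m+m)),
      (if (j:ℕ) < m then EE k h x else (starRingEnd ℂ) (EE k h x))
      = ∫ ξ : Fin 2 → ℝ, hhf m h j ξ * eee (sgn m j * Pphase k x ξ) := by
    intro x j
    by_cases hj : (j:ℕ) < m
    · rw [if_pos hj]
      unfold EE hhf sgn
      rw [if_pos hj]
      simp only [if_pos hj, one_mul]
    · rw [if_neg hj]
      unfold EE hhf sgn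
      rw [if_neg hj, ← integral_conj]
      refine integral_congr_ae (Filter.Eventually.of_forall fun ξ => ?_)
      show (starRingEnd ℂ) (h ξ * eee (Pphase k x ξ)) = _
      rw [map_mul, conj_eee]
      simp only [if_neg hj]
      rw [neg_one_mul]
  have hnorm : ∀ x, ((‖EE k h x‖^(m+m) * (F x).re^(m+m) * gwt c x : ℝ) : ℂ) = ∫ Ξ, bigE x Ξ := by
    intro x
    have e1 : (EE k h x)^m * ((starRingEnd ℂ) (EE k h x))^m = ((‖EE k h x‖^(m+m) : ℝ) : ℂ) := by
      rw [← mul_pow, Complex.mul_conj]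
      norm_cast
      rw [Complex.normSq_eq_norm_sq, ← pow_mul, two_mul]
    have e2 : F x ^ (m+m) = (((F x).re^(m+m) : ℝ) : ℂ) := by
      conv_lhs => rw [show F x = (((F x).re : ℝ):ℂ) from Complex.ext rfl (by simp [hFreal x])]
      norm_cast
    calc ((‖EE k h x‖^(m+m) * (F x).re^(m+m) * gwt c x : ℝ) : ℂ)
        = ((EE k h x)^m * ((starRingEnd ℂ) (EE k h x))^m) * (F x ^ (m+m) * ((gwt c x:ℝ):ℂ)) := by
          rw [e1, e2]; push_cast; ring
      _ = (∏ j : Fin (m+m), ∫ ξ : Fin 2 → ℝ, hhf m h j ξ * eee (sgn m j * Pphase k x ξ))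
            * (F x ^ (m+m) * ((gwt c x:ℝ):ℂ)) := by
          rw [← prod_ite_pow m (EE k h x) ((starRingEnd ℂ) (EE k h x)),
            Finset.prod_congr rfl (fun j _ => hfac x j)]
      _ = ∫ Ξ, bigE x Ξ := by
          rw [← MeasureTheory.integral_fintype_prod_volume_eq_prod (ι := Fin (m+m))
            (f := fun j ξ => hhf m h j ξ * eee (sgn m j * Pphase k x ξ)),
            ← MeasureTheory.integral_mul_const]
  have hmeasE : AEStronglyMeasurable (Function.uncurry bigE)
      ((volume : Measure (Idx k → ℝ)).prod (volume : Measure (Fin (m+m) → Fin 2 → ℝ))) := by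
    refine Measurable.aestronglyMeasurable (Measurable.mul ?_ ?_)
    · refine Finset.measurable_prod _ fun j _ => Measurable.mul ?_ ?_
      · have : Measurable (hhf m h j) := by
          unfold hhf; split
          · exact hmeas
          · exact Complex.continuous_conj.measurable.comp hmeas
        exact this.comp ((measurable_pi_apply j).comp measurable_snd)
      · exact (continuous_eee_comp (continuous_const.mul (continuous_Pphase_prod j))).measurable
    · exact ((((hFc.comp continuous_fst).pow _).mul
        (Complex.continuous_ofReal.comp ((continuous_gwt c).comp continuous_fst))).measurable)
  have hIntE : Integrable (Function.uncurry bigE)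
      ((volume : Measure (Idx k → ℝ)).prod (volume : Measure (Fin (m+m) → Fin 2 → ℝ))) := by
    refine Integrable.mono' (g := fun z => ((∫ t, χ t)^(m+m) * gwt c z.1) * ∏ j, indQ (z.2 j))
      (Integrable.mul_prod ((integrable_gwt hc).const_mul _)
        (Integrable.fintype_prod (f := fun _ => indQ) fun _ => integrable_indQ))
      hmeasE ?_
    filter_upwards with z
    show ‖bigE z.1 z.2‖ ≤ _
    have hb1 : (∏ j, ‖hhf m h j (z.2 j)‖ * ‖eee (sgn m j * Pphase k z.1 (z.2 j))‖)
        ≤ ∏ j, indQ (z.2 j) := by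
      refine Finset.prod_le_prod (fun j _ => by positivity) fun j _ => ?_
      rw [norm_eee, mul_one]
      exact hhbd j _
    have hb2 : ‖F z.1‖^(m+m) * gwt c z.1 ≤ (∫ t, χ t)^(m+m) * gwt c z.1 :=
      mul_le_mul_of_nonneg_right (pow_le_pow_left₀ (norm_nonneg _) (hFbound z.1) _)
        (gwt_nonneg c _)
    calc ‖bigE z.1 z.2‖
        = (∏ j, ‖hhf m h j (z.2 j)‖ * ‖eee (sgn m j * Pphase k z.1 (z.2 j))‖)
          * (‖F z.1‖^(m+m) * gwt c z.1) := by
          rw [hbigE]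
          simp only [norm_mul, norm_prod, norm_pow, Complex.norm_real, Real.norm_eq_abs,
            abs_of_nonneg (gwt_nonneg c _)]
      _ ≤ (∏ j, indQ (z.2 j)) * ((∫ t, χ t)^(m+m) * gwt c z.1) := by
          refine mul_le_mul hb1 hb2
            (mul_nonneg (pow_nonneg (norm_nonneg _) _) (gwt_nonneg c _))
            (Finset.prod_nonneg fun j _ => indQ_nonneg _)
      _ = ((∫ t, χ t)^(m+m) * gwt c z.1) * ∏ j, indQ (z.2 j) := by ring
  have step3 : ∀ Ξ, (∫ x : Idx k → ℝ, bigE x Ξ)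
      = (∏ j, hhf m h j (Ξ j)) * ((kap k (m+m) χ c (Phi k m Ξ) : ℝ):ℂ) := by
    intro Ξ
    have hrw : ∀ x : Idx k → ℝ, bigE x Ξ = (∏ j, hhf m h j (Ξ j))
        * (F x ^ (m+m) * ((gwt c x:ℝ):ℂ) * eee (∑ β, x β * Phi k m Ξ β)) := by
      intro x
      rw [hbigE]
      simp only [Finset.prod_mul_distrib]
      rw [← eee_sum, hphase x Ξ]
      ring
    rw [integral_congr_ae (Filter.Eventually.of_forall hrw), MeasureTheory.integral_const_mul,
      Kc_eq hχc hχnn hχsupp hF' hc (Phi k m Ξ)]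
  have hmarg : Integrable (fun Ξ : Fin (m+m) → Fin 2 → ℝ => ∫ x : Idx k → ℝ, bigE x Ξ) :=
    hIntE.integral_prod_right
  have step1 : (∫ x : Idx k → ℝ, ‖EE k h x‖^(m+m) * (F x).re^(m+m) * gwt c x)
      = (∫ x : Idx k → ℝ, ∫ Ξ : Fin (m+m) → Fin 2 → ℝ, bigE x Ξ).re := by
    rw [← integral_congr_ae (Filter.Eventually.of_forall hnorm), cintofReal,
      Complex.ofReal_re]
  rw [step1, integral_integral_swap hIntE]
  rw [show (∫ Ξ : Fin (m+m) → Fin 2 → ℝ, ∫ x : Idx k → ℝ, bigE x Ξ)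
    = ∫ Ξ : Fin (m+m) → Fin 2 → ℝ,
        (∏ j, hhf m h j (Ξ j)) * ((kap k (m+m) χ c (Phi k m Ξ) : ℝ):ℂ) from
    integral_congr_ae (Filter.Eventually.of_forall step3)]
  rw [← RCLike.re_to_complex, ← integral_re (by
    refine (hmarg.congr (Filter.Eventually.of_forall fun Ξ => (step3 Ξ))))]
  refine integral_congr_ae (Filter.Eventually.of_forall fun Ξ => ?_)
  simp only [RCLike.re_to_complex, Complex.mul_re, Complex.ofReal_re, Complex.ofReal_im]
  ring

lemma integral_indQ_eq_one : (∫ ξ : Fin 2 → ℝ, indQ ξ) = 1 := by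
  unfold indQ
  rw [integral_indicator measurableSet_Icc, setIntegral_const, smul_eq_mul, mul_one]
  have : volume (Icc (0:Fin 2 → ℝ) 1) = 1 := by
    rw [Real.volume_Icc_pi]
    simp
  rw [measureReal_def, this]
  simp

lemma EE_bound {k : ℕ} {h : (Fin 2 → ℝ) → ℂ} (hbd : ∀ ξ, ‖h ξ‖ ≤ indQ ξ) (x : Idx k → ℝ) :
    ‖EE k h x‖ ≤ 1 := by
  rw [EE, ← integral_indQ_eq_one]
  refine norm_integral_le_of_norm_le integrable_indQ ?_
  filter_upwards with ξ
  rw [norm_mul, norm_eee, mul_one]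
  exact hbd ξ

lemma EE_cont {k : ℕ} {h : (Fin 2 → ℝ) → ℂ} (hmeas : Measurable h)
    (hbd : ∀ ξ, ‖h ξ‖ ≤ indQ ξ) : Continuous (EE k h) := by
  unfold EE
  refine continuous_of_dominated ?_ ?_ integrable_indQ ?_
  · intro x
    refine Measurable.aestronglyMeasurable (hmeas.mul ?_)
    refine (continuous_eee_comp ?_).measurable
    unfold Pphase
    refine continuous_finset_sum _ fun β _ => Continuous.mul (Continuous.mul continuous_const ?_) ?_
    · exact (continuous_apply (0:Fin 2)).pow _
    · exact (continuous_apply (1:Fin 2)).pow _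
  · intro x
    filter_upwards with ξ
    rw [norm_mul, norm_eee, mul_one]
    exact hbd ξ
  · filter_upwards with ξ
    refine Continuous.mul continuous_const (continuous_eee_comp ?_)
    unfold Pphase
    exact continuous_finset_sum _ fun β _ =>
      (((continuous_apply β).mul continuous_const).mul continuous_const)

lemma integrable_keyRHS (hχc : Continuous χ) (hχnn : ∀ t, 0 ≤ χ t)
    (hχsupp : HasCompactSupport χ) {m : ℕ} {c : ℝ} (hc : 0 < c)
    (h : (Fin 2 → ℝ) → ℂ) (hmeas : Measurable h) (hbd : ∀ ξ, ‖h ξ‖ ≤ indQ ξ) :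
    Integrable (fun Ξ : Fin (m+m) → Fin 2 → ℝ =>
      kap k (m+m) χ c (Phi k m Ξ) * (∏ j, hhf m h j (Ξ j)).re) := by
  set CK := ((π*c)^((1:ℝ)/2))^(Fintype.card (Idx k))
      * ∫ t : Fin (m+m) → (Idx k → ℝ), ∏ j, χ (t j) with hCK
  have hhbd : ∀ (j : Fin (m+m)) ξ, ‖hhf m h j ξ‖ ≤ indQ ξ := by
    intro j ξ; unfold hhf; split
    · exact hbd ξ
    · simpa using hbd ξ
  refine Integrable.mono' ((Integrable.fintype_prod (f := fun _ => indQ)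
    fun _ => integrable_indQ).const_mul CK) ?_ ?_
  · refine Measurable.aestronglyMeasurable (Measurable.mul ?_ ?_)
    · exact ((continuous_kap hχc hχnn hχsupp hc).comp continuous_Phi).measurable
    · exact Complex.measurable_re.comp (measurable_prod_hhf hmeas)
  · filter_upwards with Ξ
    rw [Real.norm_eq_abs, abs_mul]
    refine mul_le_mul ?_ ?_ (abs_nonneg _) ?_
    · rw [abs_of_nonneg (kap_nonneg hχnn hc _)]
      exact kap_le hχc hχnn hχsupp hc _
    · refine le_trans (Complex.abs_re_le_norm _) ?_
      rw [norm_prod]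
      exact Finset.prod_le_prod (fun j _ => norm_nonneg _) fun j _ => hhbd j _
    · rw [hCK]
      refine mul_nonneg (by positivity) (integral_nonneg fun t => ?_)
      exact Finset.prod_nonneg fun j _ => hχnn _

lemma compare (hχc : Continuous χ) (hχnn : ∀ t, 0 ≤ χ t) (hχsupp : HasCompactSupport χ)
    (hFreal : ∀ x, (F x).im = 0)
    (hF' : ∀ x, F x = ∫ t : Idx k → ℝ, (χ t : ℂ) * eee (-(∑ β, x β * t β)))
    {m : ℕ} {c : ℝ} (hc : 0 < c) (h : (Fin 2 → ℝ) → ℂ) (hmeas : Measurable h)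
    (hbd : ∀ ξ, ‖h ξ‖ ≤ indQ ξ) :
    (∫ x : Idx k → ℝ, ‖EE k h x‖^(m+m) * (F x).re^(m+m) * gwt c x)
      ≤ ∫ x : Idx k → ℝ,
          ‖EE k (fun ξ => ((indQ ξ : ℝ):ℂ)) x‖^(m+m) * (F x).re^(m+m) * gwt c x := by
  have hImeas : Measurable (fun ξ => ((indQ ξ : ℝ):ℂ)) :=
    Complex.measurable_ofReal.comp measurable_indQ
  have hIbd : ∀ ξ, ‖((indQ ξ : ℝ):ℂ)‖ ≤ indQ ξ := by
    intro ξ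
    rw [Complex.norm_real, Real.norm_eq_abs, abs_of_nonneg (indQ_nonneg ξ)]
  have hhbd : ∀ (j : Fin (m+m)) ξ, ‖hhf m h j ξ‖ ≤ indQ ξ := by
    intro j ξ; unfold hhf; split
    · exact hbd ξ
    · simpa using hbd ξ
  rw [key hχc hχnn hχsupp hFreal hF' hc h hmeas hbd,
    key hχc hχnn hχsupp hFreal hF' hc _ hImeas hIbd]
  refine integral_mono (integrable_keyRHS hχc hχnn hχsupp hc h hmeas hbd)
    (integrable_keyRHS hχc hχnn hχsupp hc _ hImeas hIbd) fun Ξ => ?_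
  have h1 : (∏ j, hhf m (fun ξ => ((indQ ξ : ℝ):ℂ)) j (Ξ j))
      = ((∏ j, indQ (Ξ j) : ℝ) : ℂ) := by
    rw [Complex.ofReal_prod]
    refine Finset.prod_congr rfl fun j _ => ?_
    unfold hhf; split
    · rfl
    · exact Complex.conj_ofReal _
  refine mul_le_mul_of_nonneg_left ?_ (kap_nonneg hχnn hc _)
  calc (∏ j, hhf m h j (Ξ j)).re ≤ ‖∏ j, hhf m h j (Ξ j)‖ := Complex.re_le_norm _
    _ = ∏ j, ‖hhf m h j (Ξ j)‖ := norm_prod _ _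
    _ ≤ ∏ j, indQ (Ξ j) := Finset.prod_le_prod (fun j _ => norm_nonneg _) fun j _ => hhbd j _
    _ = (∏ j, hhf m (fun ξ => ((indQ ξ : ℝ):ℂ)) j (Ξ j)).re := by rw [h1, Complex.ofReal_re]

lemma gwt_mono {ι : Type*} [Fintype ι] {c c' : ℝ} (hc : 0 < c) (hcc : c ≤ c') (x : ι → ℝ) :
    gwt c x ≤ gwt c' x := by
  refine Finset.prod_le_prod (fun i _ => (Real.exp_pos _).le) fun i _ => ?_
  apply Real.exp_le_exp.2
  have h1 : c'⁻¹ ≤ c⁻¹ := inv_anti₀ hc hcc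
  nlinarith [sq_nonneg (x i)]

lemma gwt_tendsto {ι : Type*} [Fintype ι] (x : ι → ℝ) :
    Filter.Tendsto (fun n : ℕ => gwt ((n:ℝ)+1) x) Filter.atTop (nhds 1) := by
  have h0 : Filter.Tendsto (fun n : ℕ => ((n:ℝ)+1)⁻¹) Filter.atTop (nhds 0) := by
    simpa [one_div] using tendsto_one_div_add_atTop_nhds_zero_nat (𝕜 := ℝ)
  have : Filter.Tendsto (fun n : ℕ => ∏ i : ι, rexp (-((n:ℝ)+1)⁻¹ * (x i)^2))
      Filter.atTop (nhds (∏ i : ι, (1:ℝ))) := by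
    refine tendsto_finset_prod _ fun i _ => ?_
    have h1 : Filter.Tendsto (fun n : ℕ => -((n:ℝ)+1)⁻¹ * (x i)^2) Filter.atTop (nhds 0) := by
      have := (h0.neg).mul_const ((x i)^2)
      simpa using this
    have := (Real.continuous_exp.tendsto 0).comp h1
    simpa [Function.comp_def] using this
  simpa [gwt] using this

lemma integrable_T (hχc : Continuous χ) (hχnn : ∀ t, 0 ≤ χ t) (hχsupp : HasCompactSupport χ)
    (hFreal : ∀ x, (F x).im = 0) (hFnn : ∀ x, 0 ≤ (F x).re)
    (hF' : ∀ x, F x = ∫ t : Idx k → ℝ, (χ t : ℂ) * eee (-(∑ β, x β * t β)))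
    {p : ℕ} {c : ℝ} (hc : 0 < c) (h : (Fin 2 → ℝ) → ℂ) (hmeas : Measurable h)
    (hbd : ∀ ξ, ‖h ξ‖ ≤ indQ ξ) :
    Integrable (fun x : Idx k → ℝ => ‖EE k h x‖^p * (F x).re^p * gwt c x) := by
  have hFc : Continuous F := F_cont hχc hχnn hχsupp hF'
  have hMnn : (0:ℝ) ≤ ∫ t, χ t := integral_nonneg hχnn
  have hFbound : ∀ x, ‖F x‖ ≤ ∫ t, χ t := by
    intro x; rw [hF' x]
    refine le_trans (norm_integral_le_integral_norm _) (le_of_eq ?_)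
    refine integral_congr_ae (Filter.Eventually.of_forall fun t => ?_)
    simp only [norm_mul, norm_eee, mul_one, Complex.norm_real, Real.norm_eq_abs,
      abs_of_nonneg (hχnn t)]
  refine Integrable.mono' ((integrable_gwt hc).const_mul ((∫ t, χ t)^p)) ?_ ?_
  · refine Continuous.aestronglyMeasurable ?_
    exact (((EE_cont hmeas hbd).norm.pow p).mul
      ((Complex.continuous_re.comp hFc).pow p)).mul (continuous_gwt c)
  · filter_upwards with x
    rw [Real.norm_eq_abs, abs_of_nonneg (mul_nonneg (mul_nonneg (pow_nonneg (norm_nonneg _) _)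
      (pow_nonneg (hFnn x) _)) (gwt_nonneg c _))]
    have e1 : ‖EE k h x‖^p ≤ 1 := by
      calc ‖EE k h x‖^p ≤ 1^p := pow_le_pow_left₀ (norm_nonneg _) (EE_bound hbd x) p
        _ = 1 := one_pow p
    have e2 : (F x).re^p ≤ (∫ t, χ t)^p := by
      refine pow_le_pow_left₀ (hFnn x) ?_ p
      exact le_trans (Complex.re_le_norm _) (hFbound x)
    calc ‖EE k h x‖^p * (F x).re^p * gwt c x ≤ 1 * (∫ t, χ t)^p * gwt c x := by
          refine mul_le_mul_of_nonneg_right (mul_le_mul e1 e2 (pow_nonneg (hFnn x) _)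
            zero_le_one) (gwt_nonneg c _)
      _ = (∫ t, χ t)^p * gwt c x := by rw [one_mul]

end Main


/-- The weighted comparison of Section 6: if `χ : ℝ^N → [0,∞)` is continuous, nonnegative
and compactly supported, and its Fourier transform `χ̂(x) = ∫ χ(t) e(−x·t) dt` is
real-valued and nonnegative, then for every even integer `p ≥ 2` and every measurable
`f : [0,1]² → ℂ` with `|f| ≤ 1` a.e.,
`∫ |E_k f|^p χ̂^p ≤ ∫ |E_k 1|^p χ̂^p`. -/
theorem weighted_comparison (k : ℕ) (hk : 2 ≤ k)
    (χ : (Idx k → ℝ) → ℝ) (hχc : Continuous χ) (hχnn : ∀ t, 0 ≤ χ t)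
    (hχsupp : HasCompactSupport χ)
    (F : (Idx k → ℝ) → ℂ)
    (hF : ∀ x, F x = ∫ t : Idx k → ℝ,
      (χ t : ℂ) * Complex.exp (-(2 * Real.pi * Complex.I) * (∑ β : Idx k, x β * t β)))
    (hFreal : ∀ x, (F x).im = 0) (hFnn : ∀ x, 0 ≤ (F x).re) :
    ∀ p : ℕ, Even p → 2 ≤ p →
      ∀ f : (Fin 2 → ℝ) → ℂ, Measurable f →
        (∀ᵐ ξ ∂(volume.restrict (Icc (0 : Fin 2 → ℝ) 1)), ‖f ξ‖ ≤ 1) →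
        (∫⁻ x : Idx k → ℝ, ENNReal.ofReal (‖Eext k f x‖ ^ p * (F x).re ^ p)) ≤
          ∫⁻ x : Idx k → ℝ, ENNReal.ofReal (‖Eone k x‖ ^ p * (F x).re ^ p) := by
  intro p hp hp2 f hf hfb
  obtain ⟨m, rfl⟩ := hp
  -- canonical form of hF
  have hF' : ∀ x, F x = ∫ t : Idx k → ℝ, (χ t : ℂ) * eee (-(∑ β, x β * t β)) := by
    intro x
    rw [hF x]
    refine integral_congr_ae (Filter.Eventually.of_forall fun t => ?_)
    congr 1
    unfold eee
    congr 1
    push_cast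
    ring
  -- truncation and extension of f
  set f' : (Fin 2 → ℝ) → ℂ := fun ξ => if ‖f ξ‖ ≤ 1 then f ξ else 0 with hf'def
  have hf'meas : Measurable f' :=
    Measurable.ite (measurableSet_le hf.norm measurable_const) hf measurable_const
  set h : (Fin 2 → ℝ) → ℂ := (Icc (0:Fin 2 → ℝ) 1).indicator f' with hhdef
  have hmeas : Measurable h := hf'meas.indicator measurableSet_Icc
  have hf'bd : ∀ ξ, ‖f' ξ‖ ≤ 1 := by
    intro ξ
    rw [hf'def]
    dsimp only
    split
    · assumption
    · simp
  have hbd : ∀ ξ, ‖h ξ‖ ≤ indQ ξ := by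
    intro ξ
    rw [hhdef, indQ]
    unfold Set.indicator
    split
    · exact hf'bd ξ
    · simp
  set hI : (Fin 2 → ℝ) → ℂ := fun ξ => ((indQ ξ : ℝ):ℂ) with hIdef
  have hImeas : Measurable hI := Complex.measurable_ofReal.comp measurable_indQ
  have hIbd : ∀ ξ, ‖hI ξ‖ ≤ indQ ξ := by
    intro ξ
    rw [hIdef]
    dsimp only
    rw [Complex.norm_real, Real.norm_eq_abs, abs_of_nonneg (indQ_nonneg ξ)]
  -- identification of the extension operators
  have hEf : ∀ x, Eext k f x = EE k h x := by
    intro x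
    rw [Eext, EE]
    have e1 : ∀ ξ, h ξ * eee (Pphase k x ξ)
        = (Icc (0:Fin 2 → ℝ) 1).indicator (fun ξ => f' ξ * eee (Pphase k x ξ)) ξ := by
      intro ξ
      rw [hhdef]
      unfold Set.indicator
      split <;> simp
    rw [integral_congr_ae (Filter.Eventually.of_forall e1),
      integral_indicator measurableSet_Icc]
    have e2 : ∀ᵐ ξ ∂(volume.restrict (Icc (0:Fin 2 → ℝ) 1)), f ξ = f' ξ := by
      filter_upwards [hfb] with ξ hξ
      exact (if_pos hξ).symm
    refine integral_congr_ae ?_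
    filter_upwards [e2] with ξ hξ
    rw [hξ]
    rfl
  have hE1 : ∀ x, Eone k x = EE k hI x := by
    intro x
    rw [Eone, EE]
    have e1 : ∀ ξ, hI ξ * eee (Pphase k x ξ)
        = (Icc (0:Fin 2 → ℝ) 1).indicator (fun ξ => eee (Pphase k x ξ)) ξ := by
      intro ξ
      rw [hIdef, indQ]
      dsimp only
      unfold Set.indicator
      split <;> simp
    rw [integral_congr_ae (Filter.Eventually.of_forall e1),
      integral_indicator measurableSet_Icc]
    refine integral_congr_ae (Filter.Eventually.of_forall fun ξ => ?_)
    rfl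
  -- abbreviations for the two weights
  set A : (Idx k → ℝ) → ℝ := fun x => ‖EE k h x‖^(m+m) * (F x).re^(m+m) with hA
  set B : (Idx k → ℝ) → ℝ := fun x => ‖EE k hI x‖^(m+m) * (F x).re^(m+m) with hB
  have hAnn : ∀ x, 0 ≤ A x := fun x =>
    mul_nonneg (pow_nonneg (norm_nonneg _) _) (pow_nonneg (hFnn x) _)
  have hBnn : ∀ x, 0 ≤ B x := fun x =>
    mul_nonneg (pow_nonneg (norm_nonneg _) _) (pow_nonneg (hFnn x) _)
  have hAcont : Continuous A := ((EE_cont hmeas hbd).norm.pow _).mul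
    ((Complex.continuous_re.comp (F_cont hχc hχnn hχsupp hF')).pow _)
  calc ∫⁻ x : Idx k → ℝ, ENNReal.ofReal (‖Eext k f x‖ ^ (m+m) * (F x).re ^ (m+m))
      = ∫⁻ x : Idx k → ℝ, ENNReal.ofReal (A x) := by
        refine lintegral_congr fun x => ?_
        rw [hA, hEf x]
    _ = ⨆ n : ℕ, ∫⁻ x : Idx k → ℝ, ENNReal.ofReal (A x * gwt ((n:ℝ)+1) x) := by
        rw [← lintegral_iSup]
        · refine lintegral_congr fun x => ?_
          have hmono : Monotone (fun n : ℕ => ENNReal.ofReal (A x * gwt ((n:ℝ)+1) x)) := by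
            intro a b hab
            refine ENNReal.ofReal_le_ofReal (mul_le_mul_of_nonneg_left
              (gwt_mono (by positivity) (by exact_mod_cast by omega : ((a:ℝ)+1) ≤ ((b:ℝ)+1)) x)
              (hAnn x))
          have ht : Filter.Tendsto (fun n : ℕ => ENNReal.ofReal (A x * gwt ((n:ℝ)+1) x))
              Filter.atTop (nhds (ENNReal.ofReal (A x))) := by
            refine ENNReal.tendsto_ofReal ?_
            have := (gwt_tendsto (ι := Idx k) x).const_mul (A x)
            simpa using this
          exact (tendsto_nhds_unique (tendsto_atTop_iSup hmono) ht).symm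
        · intro n
          refine ENNReal.measurable_ofReal.comp (Continuous.measurable ?_)
          exact hAcont.mul (continuous_gwt _)
        · intro a b hab x
          refine ENNReal.ofReal_le_ofReal (mul_le_mul_of_nonneg_left
            (gwt_mono (by positivity) (by exact_mod_cast by omega : ((a:ℝ)+1) ≤ ((b:ℝ)+1)) x)
            (hAnn x))
    _ ≤ ∫⁻ x : Idx k → ℝ, ENNReal.ofReal (B x) := by
        refine iSup_le fun n => ?_
        have hc : (0:ℝ) < (n:ℝ)+1 := by positivity
        have hintA := integrable_T (p := m+m) hχc hχnn hχsupp hFreal hFnn hF' hc h hmeas hbd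
        have hintB := integrable_T (p := m+m) hχc hχnn hχsupp hFreal hFnn hF' hc hI hImeas hIbd
        calc ∫⁻ x : Idx k → ℝ, ENNReal.ofReal (A x * gwt ((n:ℝ)+1) x)
            = ENNReal.ofReal (∫ x : Idx k → ℝ, A x * gwt ((n:ℝ)+1) x) := by
              refine (ofReal_integral_eq_lintegral_ofReal hintA ?_).symm
              filter_upwards with x
              exact mul_nonneg (hAnn x) (gwt_nonneg _ _)
          _ ≤ ENNReal.ofReal (∫ x : Idx k → ℝ, B x * gwt ((n:ℝ)+1) x) := by
              refine ENNReal.ofReal_le_ofReal ?_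
              have := compare (m := m) hχc hχnn hχsupp hFreal hF' hc h hmeas hbd
              simpa [hA, hB, hIdef, mul_assoc] using this
          _ = ∫⁻ x : Idx k → ℝ, ENNReal.ofReal (B x * gwt ((n:ℝ)+1) x) := by
              refine ofReal_integral_eq_lintegral_ofReal hintB ?_
              filter_upwards with x
              exact mul_nonneg (hBnn x) (gwt_nonneg _ _)
          _ ≤ ∫⁻ x : Idx k → ℝ, ENNReal.ofReal (B x) := by
              refine lintegral_mono fun x => ENNReal.ofReal_le_ofReal ?_
              exact mul_le_of_le_one_right (hBnn x) (gwt_le_one hc x)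
    _ = ∫⁻ x : Idx k → ℝ, ENNReal.ofReal (‖Eone k x‖ ^ (m+m) * (F x).re ^ (m+m)) := by
        refine lintegral_congr fun x => ?_
        rw [hB, hE1 x]
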